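/- For positive semidefinite matrices A and B, Tr(AB) ≤ ‖A^{1/2} B^{1/2}‖₁², i.e., the linear overlap is bounded above by the square of the Uhlmann fidelity. -/

import Mathlib

open Matrix
open scoped ComplexOrder

/-- Square root of a positive semidefinite matrix (old Mathlib definition, since removed). -/
noncomputable def Matrix.PosSemidef.sqrt {n 𝕜 : Type*} [Fintype n] [DecidableEq n] [RCLike 𝕜]
    {A : Matrix n n 𝕜} (hA : A.PosSemidef) : Matrix n n 𝕜 :=
  hA.1.eigenvectorUnitary.1 * diagonal ((↑) ∘ (√·) ∘ hA.1.eigenvalues) *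
    (star hA.1.eigenvectorUnitary : Matrix n n 𝕜)

/-- Trace norm `‖X‖₁ = Tr √(XᴴX)`. -/
noncomputable def traceNorm {n : Type*} [Fintype n] [DecidableEq n] (X : Matrix n n ℂ) : ℝ :=
  ((Matrix.posSemidef_conjTranspose_mul_self X).sqrt.trace).re

/-- Fractional power `A^s` of a positive semidefinite matrix, defined spectrally with the
convention `0 ^ s = 0` for all real `s`. -/
noncomputable def Matrix.PosSemidef.rpow {n : Type*} [Fintype n] [DecidableEq n]
    {A : Matrix n n ℂ} (hA : A.PosSemidef) (s : ℝ) : Matrix n n ℂ :=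
  hA.1.cfc (fun x => if x = 0 then 0 else x ^ s)

/-- Matrix logarithm of a positive semidefinite matrix, defined spectrally with the
convention `log 0 = 0` on the kernel. -/
noncomputable def Matrix.PosSemidef.log {n : Type*} [Fintype n] [DecidableEq n]
    {A : Matrix n n ℂ} (hA : A.PosSemidef) : Matrix n n ℂ :=
  hA.1.cfc Real.log

/-!
With `X = A^{1/2} B^{1/2}` one has `Xᴴ X = B^{1/2} A B^{1/2}`, so `Tr(AB) = Tr(Xᴴ X) = Tr(S²)`
where `S = (Xᴴ X)^{1/2}` and `‖X‖₁ = Tr S`. For positive semidefinite `S` with eigenvalues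
`λᵢ ≥ 0`, `Tr(S²) = ∑ λᵢ² ≤ (∑ λᵢ)² = (Tr S)²`.
-/

open scoped MatrixOrder

namespace Matrix

variable {n 𝕜 : Type*} [Fintype n] [DecidableEq n] [RCLike 𝕜]

lemma PosSemidef.sqrt_eq_cfc_sqrt {A : Matrix n n 𝕜} (hA : A.PosSemidef) :
    hA.sqrt = CFC.sqrt A := by
  rw [CFC.sqrt_eq_real_sqrt A hA.nonneg, cfcₙ_eq_cfc, hA.1.cfc_eq]
  rfl

lemma PosSemidef.posSemidef_sqrt {A : Matrix n n 𝕜} (hA : A.PosSemidef) :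
    hA.sqrt.PosSemidef :=
  hA.sqrt_eq_cfc_sqrt ▸ (CFC.sqrt_nonneg A).posSemidef

lemma PosSemidef.sqrt_mul_self {A : Matrix n n 𝕜} (hA : A.PosSemidef) :
    hA.sqrt * hA.sqrt = A := by
  rw [hA.sqrt_eq_cfc_sqrt, CFC.sqrt_mul_sqrt_self A hA.nonneg]

lemma PosSemidef.trace_conjTranspose_mul_self_sqrt_mul_sqrt {A B : Matrix n n 𝕜}
    (hA : A.PosSemidef) (hB : B.PosSemidef) :
    ((hA.sqrt * hB.sqrt)ᴴ * (hA.sqrt * hB.sqrt)).trace = (A * B).trace := by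
  rw [conjTranspose_mul, hA.posSemidef_sqrt.1, hB.posSemidef_sqrt.1, Matrix.mul_assoc,
    ← Matrix.mul_assoc hA.sqrt, hA.sqrt_mul_self, trace_mul_comm, Matrix.mul_assoc,
    hB.sqrt_mul_self]

lemma IsHermitian.trace_cfc {A : Matrix n n 𝕜} (hA : A.IsHermitian) (f : ℝ → ℝ) :
    (cfc f A).trace = ∑ i, (f (hA.eigenvalues i) : 𝕜) := by
  rw [hA.cfc_eq, IsHermitian.cfc, Unitary.conjStarAlgAut_apply, trace_mul_cycle,
    Unitary.coe_star_mul_self, one_mul, trace_diagonal]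
  rfl

lemma IsHermitian.trace_mul_self {A : Matrix n n 𝕜} (hA : A.IsHermitian) :
    (A * A).trace = ∑ i, (hA.eigenvalues i : 𝕜) ^ 2 := by
  simp only [← sq, ← cfc_pow_id (R := ℝ) A 2 hA.isSelfAdjoint, hA.trace_cfc, RCLike.ofReal_pow]

lemma PosSemidef.re_trace_mul_self_le_sq {S : Matrix n n 𝕜} (hS : S.PosSemidef) :
    RCLike.re (S * S).trace ≤ (RCLike.re S.trace) ^ 2 := by
  simp only [hS.1.trace_mul_self, hS.1.trace_eq_sum_eigenvalues, map_sum, ← RCLike.ofReal_pow,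
    RCLike.ofReal_re]
  exact Finset.sum_sq_le_sq_sum_of_nonneg fun i _ => hS.eigenvalues_nonneg i

end Matrix

lemma re_trace_conjTranspose_mul_self_le_traceNorm_sq {n : Type*} [Fintype n] [DecidableEq n]
    (X : Matrix n n ℂ) :
    (Xᴴ * X).trace.re ≤ traceNorm X ^ 2 := by
  have hP := posSemidef_conjTranspose_mul_self X
  have h := hP.posSemidef_sqrt.re_trace_mul_self_le_sq
  rw [hP.sqrt_mul_self] at h
  exact h

/-- Linear overlap is bounded by the square of the Uhlmann fidelity:
`Tr(AB) ≤ ‖A^{1/2} B^{1/2}‖₁²` for positive semidefinite `A`, `B`. -/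
theorem stmt1 {n : Type*} [Fintype n] [DecidableEq n]
    {A B : Matrix n n ℂ} (hA : A.PosSemidef) (hB : B.PosSemidef) :
    ((A * B).trace).re ≤ (traceNorm (hA.sqrt * hB.sqrt)) ^ 2 := by
  rw [← hA.trace_conjTranspose_mul_self_sqrt_mul_sqrt hB]
  exact re_trace_conjTranspose_mul_self_le_traceNorm_sq _
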